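/- Let μ be a stable matching of a matching market in which all pairs are mutually acceptable, and let f be a firm with μ(f) = w ∈ W. If the operation breakmarriage(μ, f) terminates successfully with resulting matching μ', then there exists a path from the almost stable matching μ_{-f} to μ' in which every step satisfies a best blocking pair of the current matching. -/

import Mathlib

/-- A matching market of size `n`.  `fpref f` is the rank permutation of firm `f`:
`fpref f w` is the rank firm `f` assigns to worker `w` (rank `0` = most
preferred), and similarly `wpref` for workers.  All pairs are mutually
acceptable: being unmatched is implicitly worse than being matched to anybody. -/
structure Market (n : ℕ) where
  fpref : Fin n → Fin n ≃ Fin n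
  wpref : Fin n → Fin n ≃ Fin n

/-- A (possibly partial) one-to-one matching between firms and workers. -/
structure Matching (n : ℕ) where
  mf : Fin n → Option (Fin n)
  mw : Fin n → Option (Fin n)
  consistent : ∀ f w, mf f = some w ↔ mw w = some f

variable {n : ℕ}

/-- Firm `f` strictly prefers worker `w` to the (optional) partner `o`. -/
def FPrefOver (M : Market n) (f w : Fin n) (o : Option (Fin n)) : Prop :=
  ∀ w' ∈ o, M.fpref f w < M.fpref f w'

/-- Worker `w` strictly prefers firm `f` to the (optional) partner `o`. -/
def WPrefOver (M : Market n) (w f : Fin n) (o : Option (Fin n)) : Prop :=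
  ∀ f' ∈ o, M.wpref w f < M.wpref w f'

/-- `(f, w)` is a blocking pair of `μ`. -/
def Blocking (M : Market n) (μ : Matching n) (f w : Fin n) : Prop :=
  μ.mf f ≠ some w ∧ FPrefOver M f w (μ.mf f) ∧ WPrefOver M w f (μ.mw w)

/-- A matching is stable if it admits no blocking pair. -/
def Stable (M : Market n) (μ : Matching n) : Prop :=
  ∀ f w, ¬ Blocking M μ f w

/-- A state of the restarted deferred-acceptance process underlying
`breakmarriage`: `asg` is the current tentative assignment (firm to tentatively
held worker), and `free` records the free firm together with the rank of the next
worker on her list to whom she will propose. -/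
structure BMState (n : ℕ) where
  asg : Fin n → Option (Fin n)
  free : Option (Fin n × ℕ)

/-- The initial state of `breakmarriage (μ, f)` with `wbar = μ(f)`: the pair
`(f, wbar)` is broken, everyone else keeps their partner under `μ`, and `f` is
about to propose to the worker immediately following `wbar` on her list. -/
def bmInit (M : Market n) (μ : Matching n) (f wbar : Fin n) : BMState n :=
  ⟨fun g => if g = f then none else μ.mf g, some (f, (M.fpref f wbar : ℕ) + 1)⟩

/-- One step of the restarted deferred-acceptance process of
`breakmarriage (μ, f)` where `wbar = μ(f)` is semi-free (he accepts only firms he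
strictly prefers to `f`).  The free firm `f'` proposes to the worker `wt` of rank
`r` on her list; either `wt` rejects (because he holds, or in the case of `wbar`
semi-holds, a firm he weakly prefers) and `f'` moves on to the next rank, or `wt`
accepts and displaces his currently held firm, who becomes free. -/
def BMStep (M : Market n) (f wbar : Fin n) (s s' : BMState n) : Prop :=
  ∃ f' r, ∃ hr : r < n,
    s.free = some (f', r) ∧
    ((∃ g, s.asg g = some ((M.fpref f').symm ⟨r, hr⟩) ∧
        ¬ (M.wpref ((M.fpref f').symm ⟨r, hr⟩) f' <
            M.wpref ((M.fpref f').symm ⟨r, hr⟩) g) ∧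
        s' = ⟨s.asg, some (f', r + 1)⟩) ∨
     ((M.fpref f').symm ⟨r, hr⟩ = wbar ∧ (∀ g, s.asg g ≠ some wbar) ∧
        ¬ (M.wpref wbar f' < M.wpref wbar f) ∧
        s' = ⟨s.asg, some (f', r + 1)⟩) ∨
     (∃ g, s.asg g = some ((M.fpref f').symm ⟨r, hr⟩) ∧
        (M.wpref ((M.fpref f').symm ⟨r, hr⟩) f' <
            M.wpref ((M.fpref f').symm ⟨r, hr⟩) g) ∧
        s' = ⟨fun x => if x = f' then some ((M.fpref f').symm ⟨r, hr⟩)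
                else if x = g then none else s.asg x,
              some (g, (M.fpref g ((M.fpref f').symm ⟨r, hr⟩) : ℕ) + 1)⟩))

/-- The state `s` terminates successfully with resulting matching `μ'`: the free
firm `f'` is about to propose to the semi-free worker `wbar`, whom nobody holds
and who strictly prefers `f'` to `f`; the resulting assignment matches `f'` with
`wbar` and keeps the rest of the tentative assignment. -/
def BMSuccess (M : Market n) (f wbar : Fin n) (s : BMState n) (μ' : Matching n) : Prop :=
  ∃ f' r, ∃ hr : r < n,
    s.free = some (f', r) ∧ (M.fpref f').symm ⟨r, hr⟩ = wbar ∧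
    (∀ g, s.asg g ≠ some wbar) ∧ M.wpref wbar f' < M.wpref wbar f ∧
    μ'.mf = Function.update s.asg f' (some wbar)

/-- The operation `breakmarriage (μ, f)` terminates successfully with resulting
matching `μ'`. -/
def Breakmarriage (M : Market n) (μ : Matching n) (f : Fin n) (μ' : Matching n) : Prop :=
  ∃ wbar, μ.mf f = some wbar ∧
    ∃ s, Relation.ReflTransGen (BMStep M f wbar) (bmInit M μ f wbar) s ∧
      BMSuccess M f wbar s μ'
/-- `μ'` is obtained from `μ` by satisfying the blocking pair `(f, w)`. -/
def Satisfies (M : Market n) (μ μ' : Matching n) (f w : Fin n) : Prop :=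
  Blocking M μ f w ∧ μ'.mf f = some w ∧
  (∀ w', μ.mf f = some w' → μ'.mw w' = none) ∧
  (∀ f', μ.mw w = some f' → μ'.mf f' = none) ∧
  (∀ f', f' ≠ f → μ.mw w ≠ some f' → μ'.mf f' = μ.mf f') ∧
  (∀ w', w' ≠ w → μ.mf f ≠ some w' → μ'.mw w' = μ.mw w')

/-- `(f, w)` is a best blocking pair of `μ`: it is a blocking pair and at least one
of its two members prefers the other member to every other agent with whom he or
she forms a blocking pair of `μ`. -/
def BestBlocking (M : Market n) (μ : Matching n) (f w : Fin n) : Prop :=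
  Blocking M μ f w ∧
  ((∀ w', Blocking M μ f w' → w' ≠ w → M.fpref f w < M.fpref f w') ∨
   (∀ f', Blocking M μ f' w → f' ≠ f → M.wpref w f < M.wpref w f'))

/-- One step of the best-blocking-pair dynamics. -/
def BestStepRel (M : Market n) (μ μ' : Matching n) : Prop :=
  ∃ f w, BestBlocking M μ f w ∧ Satisfies M μ μ' f w

/-- `μ.unmatch f` is the matching `μ_{-f}` obtained from `μ` by unmatching firm `f`
and its partner (if any); all other partnerships are unchanged. -/
def Matching.unmatch (μ : Matching n) (f : Fin n) : Matching n where
  mf f' := if f' = f then none else μ.mf f'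
  mw w := if μ.mw w = some f then none else μ.mw w
  consistent := by
    intro f' w
    try dsimp only
    constructor
    · intro h
      by_cases h1 : f' = f
      · simp [h1] at h
      · rw [if_neg h1] at h
        have h2 := (μ.consistent f' w).mp h
        have hne : μ.mw w ≠ some f := by
          rw [h2]; intro e; exact h1 (Option.some_injective _ e)
        rw [if_neg hne]; exact h2
    · intro h
      by_cases h2 : μ.mw w = some f
      · rw [if_pos h2] at h; exact absurd h (by simp)
      · rw [if_neg h2] at h
        have h1 : f' ≠ f := fun e => h2 (e ▸ h)
        rw [if_neg h1]; exact (μ.consistent f' w).mpr h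

section Aux

lemma matching_ext' {μ ν : Matching n} (h : μ.mf = ν.mf) : μ = ν := by
  obtain ⟨mf, mw, hc⟩ := μ
  obtain ⟨mf', mw', hc'⟩ := ν
  simp only at h
  subst h
  have : mw = mw' := by
    funext w
    cases hw : mw w with
    | none =>
      cases hw' : mw' w with
      | none => rfl
      | some g =>
        have := (hc g w).mp ((hc' g w).mpr hw')
        rw [hw] at this; exact nomatch this
    | some g =>
      have := (hc' g w).mp ((hc g w).mpr hw)
      rw [this]
  subst this; rfl

lemma mw_none {ν : Matching n} {w : Fin n} (h : ∀ g, ν.mf g ≠ some w) :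
    ν.mw w = none := by
  cases hw : ν.mw w with
  | none => rfl
  | some g => exact absurd ((ν.consistent g w).mpr hw) (h g)

lemma mw_congr' {ν ν' : Matching n} {w : Fin n}
    (h : ∀ g, ν'.mf g = some w ↔ ν.mf g = some w) : ν'.mw w = ν.mw w := by
  cases h1 : ν'.mw w with
  | none =>
    refine (mw_none fun g hg => ?_).symm
    have : ν'.mw w = some g := (ν'.consistent g w).mp ((h g).mpr hg)
    rw [h1] at this; exact nomatch this
  | some g =>
    have : ν.mw w = some g :=
      (ν.consistent g w).mp ((h g).mp ((ν'.consistent g w).mpr h1))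
    rw [this]

/-- Build a matching from an injective partial assignment of firms to workers. -/
noncomputable def matchingOf (asg : Fin n → Option (Fin n))
    (inj : ∀ g g' w, asg g = some w → asg g' = some w → g = g') : Matching n where
  mf := asg
  mw w := if h : ∃ g, asg g = some w then some h.choose else none
  consistent := by
    intro f w
    constructor
    · intro hf
      have he : ∃ g, asg g = some w := ⟨f, hf⟩
      rw [dif_pos he]
      exact congrArg some (inj _ _ _ he.choose_spec hf)
    · intro hw
      by_cases h : ∃ g, asg g = some w
      · rw [dif_pos h] at hw
        have := Option.some_injective _ hw
        exact this ▸ h.choose_spec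
      · rw [dif_neg h] at hw; exact nomatch hw

lemma worker_matched (M : Market n) {μ : Matching n} (hμ : Stable M μ) (w : Fin n) :
    ∃ g, μ.mf g = some w := by
  by_contra hno
  push_neg at hno
  have hmw : μ.mw w = none := mw_none hno
  by_cases hall : ∀ g, ∃ w', μ.mf g = some w'
  · set e : Fin n → Fin n := fun g => (hall g).choose with he
    have hinj : Function.Injective e := by
      intro a b hab
      have ha := (hall a).choose_spec
      have hb := (hall b).choose_spec
      have : μ.mw (e a) = some a := (μ.consistent a (e a)).mp ha
      have hb' : μ.mw (e b) = some b := (μ.consistent b (e b)).mp hb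
      rw [hab, hb'] at this
      exact (Option.some_injective _ this).symm
    obtain ⟨g, hg⟩ := (Finite.injective_iff_surjective.mp hinj) w
    exact hno g (hg ▸ (hall g).choose_spec)
  · push_neg at hall
    obtain ⟨g, hg⟩ := hall
    have hgn : μ.mf g = none := by
      cases hx : μ.mf g with
      | none => rfl
      | some w' => exact absurd hx (hg w')
    refine hμ g w ⟨?_, ?_, ?_⟩
    · rw [hgn]; exact nofun
    · rw [hgn]; intro w' hw'; exact absurd hw' (by simp)
    · rw [hmw]; intro f' hf'; exact absurd hf' (by simp)

lemma firm_matched (M : Market n) {μ : Matching n} (hμ : Stable M μ) (g : Fin n) :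
    ∃ w, μ.mf g = some w := by
  by_contra hno
  push_neg at hno
  have hgn : μ.mf g = none := by
    cases hx : μ.mf g with
    | none => rfl
    | some w' => exact absurd hx (hno w')
  by_cases hall : ∀ w, ∃ g', μ.mw w = some g'
  · set e : Fin n → Fin n := fun w => (hall w).choose with he
    have hinj : Function.Injective e := by
      intro a b hab
      have ha := (hall a).choose_spec
      have hb := (hall b).choose_spec
      have : μ.mf (e a) = some a := (μ.consistent (e a) a).mpr ha
      have hb' : μ.mf (e b) = some b := (μ.consistent (e b) b).mpr hb
      rw [hab, hb'] at this
      exact (Option.some_injective _ this).symm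
    obtain ⟨w, hw⟩ := (Finite.injective_iff_surjective.mp hinj) g
    have : μ.mw w = some g := hw ▸ (hall w).choose_spec
    exact hno w ((μ.consistent g w).mpr this)
  · push_neg at hall
    obtain ⟨w, hw⟩ := hall
    have hwn : μ.mw w = none := by
      cases hx : μ.mw w with
      | none => rfl
      | some g' => exact absurd hx (hw g')
    refine hμ g w ⟨?_, ?_, ?_⟩
    · rw [hgn]; exact nofun
    · rw [hgn]; intro w' hw'; exact absurd hw' (by simp)
    · rw [hwn]; intro f' hf'; exact absurd hf' (by simp)

/-- If `μ` is stable, `g` is matched to `w_g` and strictly prefers `w` to `w_g`,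
then the firm matched to `w` under `μ` is strictly preferred by `w` to `g`. -/
lemma block_helper (M : Market n) {μ : Matching n} (hμ : Stable M μ)
    {g w_g w : Fin n} (hg : μ.mf g = some w_g)
    (hlt : M.fpref g w < M.fpref g w_g) :
    ∃ h, μ.mf h = some w ∧ M.wpref w h < M.wpref w g := by
  obtain ⟨h, hh⟩ := worker_matched M hμ w
  refine ⟨h, hh, ?_⟩
  by_contra hcon
  push_neg at hcon
  have hne : h ≠ g := by
    rintro rfl
    rw [hg] at hh
    exact absurd (Option.some_injective _ hh) (fun e => lt_irrefl _ (e ▸ hlt))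
  have hstrict : M.wpref w g < M.wpref w h :=
    lt_of_le_of_ne hcon (fun e => hne ((M.wpref w).injective e.symm))
  refine hμ g w ⟨?_, ?_, ?_⟩
  · rw [hg]; intro e
    exact absurd (Option.some_injective _ e) (fun e' => lt_irrefl _ (e' ▸ hlt))
  · rw [hg]; intro w' hw'
    rw [Option.mem_def] at hw'
    rw [← Option.some_injective _ hw']
    exact hlt
  · intro f' hf'
    rw [Option.mem_def, ← μ.consistent] at hf'
    have h1 := (μ.consistent f' w).mp hf'
    have h2 := (μ.consistent h w).mp hh
    rw [h1] at h2
    have : f' = h := Option.some_injective _ h2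
    exact this ▸ hstrict

/-- The invariant maintained by the restarted deferred-acceptance process. -/
def BMInv (M : Market n) (wbar : Fin n) (s : BMState n) : Prop :=
  ∃ f' r, s.free = some (f', r) ∧
    s.asg f' = none ∧
    (∀ g, g ≠ f' → s.asg g ≠ none) ∧
    (∀ g g' w, s.asg g = some w → s.asg g' = some w → g = g') ∧
    (∀ g, s.asg g ≠ some wbar) ∧
    (∀ g w_g, s.asg g = some w_g → ∀ w, w ≠ wbar → M.fpref g w < M.fpref g w_g →
       ∃ h, s.asg h = some w ∧ M.wpref w h < M.wpref w g) ∧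
    (∀ w, w ≠ wbar → (M.fpref f' w : ℕ) < r →
       ∃ h, s.asg h = some w ∧ M.wpref w h < M.wpref w f')

end Aux


lemma bminv_init (M : Market n) {μ : Matching n} (hμ : Stable M μ) (f wbar : Fin n)
    (hf : μ.mf f = some wbar) : BMInv M wbar (bmInit M μ f wbar) := by
  have hasg : (bmInit M μ f wbar).asg = fun g => if g = f then none else μ.mf g := rfl
  refine ⟨f, (M.fpref f wbar : ℕ) + 1, rfl, ?_, ?_, ?_, ?_, ?_, ?_⟩
  · simp [hasg]
  · intro g hg
    simp only [hasg]
    rw [if_neg hg]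
    obtain ⟨w, hw⟩ := firm_matched M hμ g
    rw [hw]; exact nofun
  · intro g g' w hg hg'
    simp only [hasg] at hg hg'
    by_cases h1 : g = f
    · rw [if_pos h1] at hg; exact nomatch hg
    by_cases h2 : g' = f
    · rw [if_pos h2] at hg'; exact nomatch hg'
    rw [if_neg h1] at hg; rw [if_neg h2] at hg'
    have := (μ.consistent g w).mp hg
    rw [(μ.consistent g' w).mp hg'] at this
    exact (Option.some_injective _ this).symm
  · intro g
    simp only [hasg]
    by_cases h1 : g = f
    · rw [if_pos h1]; exact nofun
    · rw [if_neg h1]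
      intro e
      have := (μ.consistent g wbar).mp e
      rw [(μ.consistent f wbar).mp hf] at this
      exact h1 (Option.some_injective _ this).symm
  · intro g w_g hg w hw hlt
    simp only [hasg] at hg
    by_cases h1 : g = f
    · rw [if_pos h1] at hg; exact absurd hg nofun
    rw [if_neg h1] at hg
    obtain ⟨h, hh, hws⟩ := block_helper M hμ hg hlt
    refine ⟨h, ?_, hws⟩
    simp only [hasg]
    rw [if_neg]; · exact hh
    rintro rfl
    rw [hf] at hh
    exact hw (Option.some_injective _ hh).symm
  · intro w hw hrank
    have hle : (M.fpref f w : ℕ) ≤ (M.fpref f wbar : ℕ) := Nat.lt_succ_iff.mp hrank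
    have hne : M.fpref f w ≠ M.fpref f wbar := fun e => hw ((M.fpref f).injective e)
    have hlt : M.fpref f w < M.fpref f wbar :=
      lt_of_le_of_ne (Fin.le_def.mpr hle) hne
    obtain ⟨h, hh, hws⟩ := block_helper M hμ hf hlt
    refine ⟨h, ?_, hws⟩
    simp only [hasg]
    rw [if_neg]; · exact hh
    rintro rfl
    rw [hf] at hh
    exact hw (Option.some_injective _ hh).symm

lemma bminv_step (M : Market n) (f wbar : Fin n) {s s' : BMState n}
    (hInv : BMInv M wbar s) (hstep : BMStep M f wbar s s')
    (ν : Matching n) (hν : ν.mf = s.asg) :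
    BMInv M wbar s' ∧ ∃ ν' : Matching n, ν'.mf = s'.asg ∧
      Relation.ReflTransGen (BestStepRel M) ν ν' := by
  obtain ⟨f', r, hfree, hA, hB, hInj, hD, hBB, hC⟩ := hInv
  obtain ⟨f'', r', hr, hfree', hcase⟩ := hstep
  rw [hfree] at hfree'
  have hpr := Option.some_injective _ hfree'
  obtain ⟨h1, h2⟩ : f' = f'' ∧ r = r' := ⟨congrArg Prod.fst hpr, congrArg Prod.snd hpr⟩
  subst h1; subst h2
  set wt := (M.fpref f').symm ⟨r, hr⟩ with hwt
  have hwtrank : M.fpref f' wt = ⟨r, hr⟩ := (M.fpref f').apply_symm_apply _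
  rcases hcase with ⟨g, hg, hrej, rfl⟩ | ⟨hwtbar, hnone, hrej, rfl⟩ | ⟨g, hg, hacc, rfl⟩
  · -- rejection by a held worker
    refine ⟨⟨f', r + 1, rfl, hA, hB, hInj, hD, hBB, ?_⟩, ν, hν, .refl⟩
    intro w hw hrank
    rcases Nat.lt_succ_iff_lt_or_eq.mp hrank with hcs | hcs
    · exact hC w hw hcs
    · have hweq : w = wt := by
        have : M.fpref f' w = ⟨r, hr⟩ := Fin.ext hcs
        rw [← hwtrank] at this
        exact (M.fpref f').injective this
      rw [hweq]
      refine ⟨g, hg, ?_⟩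
      have hne : g ≠ f' := by
        intro e; rw [e, hA] at hg; exact nomatch hg
      exact lt_of_le_of_ne (not_lt.mp hrej) (fun e => hne ((M.wpref wt).injective e))
  · -- semi-free rejection by wbar
    refine ⟨⟨f', r + 1, rfl, hA, hB, hInj, hD, hBB, ?_⟩, ν, hν, .refl⟩
    intro w hw hrank
    rcases Nat.lt_succ_iff_lt_or_eq.mp hrank with hcs | hcs
    · exact hC w hw hcs
    · exfalso
      apply hw
      have : M.fpref f' w = ⟨r, hr⟩ := Fin.ext hcs
      rw [← hwtrank] at this
      rw [(M.fpref f').injective this]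
      exact hwtbar
  · -- acceptance: f' takes wt from g
    have hgf : g ≠ f' := by
      intro e; rw [e, hA] at hg; exact nomatch hg
    have hwtbar : wt ≠ wbar := by
      intro e; exact hD g (e ▸ hg)
    set asg' : Fin n → Option (Fin n) :=
      fun x => if x = f' then some wt else if x = g then none else s.asg x with hasg'
    have key : ∀ x w, asg' x = some w →
        (x = f' ∧ w = wt) ∨ (x ≠ f' ∧ x ≠ g ∧ s.asg x = some w) := by
      intro x w hx
      simp only [hasg'] at hx
      by_cases hx1 : x = f'
      · rw [if_pos hx1] at hx
        exact Or.inl ⟨hx1, (Option.some_injective _ hx).symm⟩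
      by_cases hx2 : x = g
      · rw [if_neg hx1, if_pos hx2] at hx; exact absurd hx nofun
      · rw [if_neg hx1, if_neg hx2] at hx; exact Or.inr ⟨hx1, hx2, hx⟩
    have hf'wt : asg' f' = some wt := by simp [hasg']
    have hgnone : asg' g = none := by simp [hasg', hgf]
    have hother : ∀ x, x ≠ f' → x ≠ g → asg' x = s.asg x := by
      intro x hx1 hx2; simp [hasg', hx1, hx2]
    have hInj' : ∀ a b w, asg' a = some w → asg' b = some w → a = b := by
      intro a b w ha hb
      rcases key a w ha with ⟨ha1, ha2⟩ | ⟨ha1, ha2, ha3⟩ <;>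
        rcases key b w hb with ⟨hb1, hb2⟩ | ⟨hb1, hb2, hb3⟩
      · rw [ha1, hb1]
      · exact absurd (hInj b g _ hb3 (ha2 ▸ hg)) hb2
      · exact absurd (hInj a g _ ha3 (hb2 ▸ hg)) ha2
      · exact hInj a b w ha3 hb3
    have hInvNew : BMInv M wbar ⟨asg', some (g, (M.fpref g wt : ℕ) + 1)⟩ := by
      refine ⟨g, (M.fpref g wt : ℕ) + 1, rfl, hgnone, ?_, hInj', ?_, ?_, ?_⟩
      · intro h hh
        show asg' h ≠ none
        by_cases hhf : h = f'
        · rw [hhf, hf'wt]; exact nofun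
        · rw [hother h hhf hh]; exact hB h hhf
      · intro h e
        rcases key h wbar e with ⟨_, he2⟩ | ⟨_, _, he3⟩
        · exact hwtbar he2.symm
        · exact hD h he3
      · intro h w_h hh w hw hlt
        rcases key h w_h hh with ⟨he1, he2⟩ | ⟨he1, he2, he3⟩
        · -- h = f', holds wt
          rw [he1, he2, hwtrank] at hlt
          obtain ⟨h', hh', hws⟩ := hC w hw (Fin.lt_def.mp hlt)
          have h'f : h' ≠ f' := by
            intro e; rw [e, hA] at hh'; exact nomatch hh'
          have h'g : h' ≠ g := by
            intro e
            rw [e, hg] at hh'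
            have hwwt : w = wt := (Option.some_injective _ hh').symm
            rw [hwwt, hwtrank] at hlt
            exact absurd hlt (lt_irrefl _)
          refine ⟨h', ?_, ?_⟩
          · show asg' h' = some w
            rw [hother h' h'f h'g]; exact hh'
          · rw [he1]; exact hws
        · obtain ⟨h', hh', hws⟩ := hBB h w_h he3 w hw hlt
          by_cases h'g : h' = g
          · -- the old witness was g, who held wt; new holder of wt is f'
            have hwwt : w = wt := by
              rw [h'g, hg] at hh'
              exact (Option.some_injective _ hh').symm
            refine ⟨f', ?_, ?_⟩
            · show asg' f' = some w
              rw [hwwt]; exact hf'wt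
            · rw [hwwt] at hws ⊢
              exact lt_trans hacc (h'g ▸ hws)
          · have h'f : h' ≠ f' := by
              intro e; rw [e, hA] at hh'; exact nomatch hh'
            refine ⟨h', ?_, hws⟩
            show asg' h' = some w
            rw [hother h' h'f h'g]; exact hh'
      · intro w hw hrank
        rcases Nat.lt_succ_iff_lt_or_eq.mp hrank with hlt | heq
        · have hlt' : M.fpref g w < M.fpref g wt := Fin.lt_def.mpr hlt
          obtain ⟨h', hh', hws⟩ := hBB g wt hg w hw hlt'
          have h'f : h' ≠ f' := by
            intro e; rw [e, hA] at hh'; exact nomatch hh'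
          have h'g : h' ≠ g := by
            intro e
            rw [e, hg] at hh'
            have hwwt : wt = w := Option.some_injective _ hh'
            rw [hwwt] at hlt'
            exact absurd hlt' (lt_irrefl _)
          refine ⟨h', ?_, hws⟩
          show asg' h' = some w
          rw [hother h' h'f h'g]; exact hh'
        · have hweq : w = wt := (M.fpref g).injective (Fin.ext heq)
          rw [hweq]
          exact ⟨f', hf'wt, hacc⟩
    refine ⟨hInvNew, matchingOf asg' hInj', rfl, ?_⟩
    have hmwwt : ν.mw wt = some g := (ν.consistent g wt).mp (by rw [hν]; exact hg)
    have hmff' : ν.mf f' = none := by rw [hν]; exact hA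
    have hblock : Blocking M ν f' wt := by
      refine ⟨by rw [hmff']; exact nofun, ?_, ?_⟩
      · rw [hmff']; intro w' hw'; exact absurd hw' (by simp)
      · rw [hmwwt]; intro x hx
        rw [Option.mem_def] at hx
        have hxg : x = g := Option.some_injective _ hx.symm
        rw [hxg]; exact hacc
    refine Relation.ReflTransGen.single ⟨f', wt, ⟨hblock, Or.inr ?_⟩, ?_⟩
    · -- worker-side best: no other firm blocks with wt
      intro h'' hbl hne
      exfalso
      obtain ⟨w_h, hwh⟩ := Option.ne_none_iff_exists'.mp (hB h'' hne)
      have hfp : M.fpref h'' wt < M.fpref h'' w_h := by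
        have := hbl.2.1
        rw [hν, hwh] at this
        exact this w_h rfl
      obtain ⟨h3, hh3, hws3⟩ := hBB h'' w_h hwh wt hwtbar hfp
      have hh3g : h3 = g := hInj h3 g wt hh3 hg
      rw [hh3g] at hws3
      have hwp : M.wpref wt h'' < M.wpref wt g := by
        have := hbl.2.2
        rw [hmwwt] at this
        exact this g rfl
      exact absurd (lt_trans hws3 hwp) (lt_irrefl _)
    · -- Satisfies
      refine ⟨hblock, hf'wt, ?_, ?_, ?_, ?_⟩
      · intro w' hw'
        rw [hmff'] at hw'; exact absurd hw' nofun
      · intro h hh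
        rw [hmwwt] at hh
        have : h = g := (Option.some_injective _ hh).symm
        show asg' h = none
        rw [this]; exact hgnone
      · intro h hh1 hh2
        have hh2' : h ≠ g := by rintro rfl; exact hh2 hmwwt
        show asg' h = ν.mf h
        rw [hother h hh1 hh2', hν]
      · intro w' hw1 _hw2
        refine mw_congr' ?_
        intro h
        constructor
        · intro hh
          rcases key h w' hh with ⟨_, he2⟩ | ⟨_, _, he3⟩
          · exact absurd he2 hw1
          · rw [hν]; exact he3
        · intro hh
          rw [hν] at hh
          have hh1 : h ≠ f' := by
            intro e; rw [e, hA] at hh; exact nomatch hh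
          have hh2 : h ≠ g := by
            intro e
            rw [e, hg] at hh
            exact hw1 (Option.some_injective _ hh).symm
          show asg' h = some w'
          rw [hother h hh1 hh2]; exact hh

/-- **Lemma 3**: if `μ` is stable and `breakmarriage (μ, f)` terminates
successfully with resulting matching `μ'`, then there is a path from the almost
stable matching `μ_{-f}` to `μ'` every step of which satisfies a best blocking
pair of the current matching. -/
theorem stmt11 (M : Market n) (μ : Matching n) (hμ : Stable M μ) (f : Fin n)
    (μ' : Matching n) (h : Breakmarriage M μ f μ') :
    Relation.ReflTransGen (BestStepRel M) (μ.unmatch f) μ' := by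
  obtain ⟨wbar, hf, s, hrtg, hsucc⟩ := h
  have hinit : (μ.unmatch f).mf = (bmInit M μ f wbar).asg := rfl
  have key : BMInv M wbar s ∧ ∃ ν : Matching n, ν.mf = s.asg ∧
      Relation.ReflTransGen (BestStepRel M) (μ.unmatch f) ν := by
    clear hsucc
    induction hrtg with
    | refl => exact ⟨bminv_init M hμ f wbar hf, μ.unmatch f, hinit, .refl⟩
    | tail _hab hbc ih =>
      obtain ⟨hInv, ν, hν, hpath⟩ := ih
      obtain ⟨hInv', ν', hν', hpath'⟩ := bminv_step M f wbar hInv hbc ν hν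
      exact ⟨hInv', ν', hν', hpath.trans hpath'⟩
  obtain ⟨hInv, ν, hν, hpath⟩ := key
  obtain ⟨f1, r1, hr1, hfree1, hwbar, hno, hpref, hmf'⟩ := hsucc
  obtain ⟨f', r, hfree, hA, hB, hInj, hD, hBB, hC⟩ := hInv
  rw [hfree] at hfree1
  have hpr := Option.some_injective _ hfree1
  obtain ⟨h1, h2⟩ : f' = f1 ∧ r = r1 := ⟨congrArg Prod.fst hpr, congrArg Prod.snd hpr⟩
  subst h1; subst h2
  have hmwbar : ν.mw wbar = none := mw_none (fun g hg => hno g (by rw [← hν]; exact hg))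
  have hmff' : ν.mf f' = none := by rw [hν]; exact hA
  have hrank : M.fpref f' wbar = ⟨r, hr1⟩ := by
    rw [← hwbar]; exact (M.fpref f').apply_symm_apply _
  have hblock : Blocking M ν f' wbar := by
    refine ⟨by rw [hmff']; exact nofun, ?_, ?_⟩
    · rw [hmff']; intro w' hw'; exact absurd hw' (by simp)
    · rw [hmwbar]; intro x hx; exact absurd hx (by simp)
  refine hpath.tail ⟨f', wbar, ⟨hblock, Or.inl ?_⟩, hblock, ?_, ?_, ?_, ?_, ?_⟩
  · -- firm-side best
    intro w' hbl hne
    by_contra hcon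
    push_neg at hcon
    have hlt : M.fpref f' w' < M.fpref f' wbar :=
      lt_of_le_of_ne hcon (fun e => hne ((M.fpref f').injective e))
    rw [hrank] at hlt
    obtain ⟨h, hh, hws⟩ := hC w' hne (Fin.lt_def.mp hlt)
    have hmw : ν.mw w' = some h := (ν.consistent h w').mp (by rw [hν]; exact hh)
    have := hbl.2.2
    rw [hmw] at this
    exact absurd (lt_trans hws (this h rfl)) (lt_irrefl _)
  · rw [hmf']; exact Function.update_self f' (some wbar) s.asg
  · intro w' hw'
    rw [hmff'] at hw'; exact absurd hw' nofun
  · intro h hh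
    rw [hmwbar] at hh; exact absurd hh nofun
  · intro h hh1 _hh2
    rw [hmf', Function.update_of_ne hh1, hν]
  · intro w' hw1 _hw2
    refine mw_congr' ?_
    intro h
    rw [hmf']
    constructor
    · intro hh
      by_cases he : h = f'
      · rw [he, Function.update_self] at hh
        exact absurd (Option.some_injective _ hh).symm hw1
      · rw [Function.update_of_ne he] at hh
        rw [hν]; exact hh
    · intro hh
      rw [hν] at hh
      have he : h ≠ f' := by
        intro e; rw [e, hA] at hh; exact nomatch hh
      rw [Function.update_of_ne he]; exact hh
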